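/- Let 𝓡 = 𝓡(ℝ,𝔽) with 𝔽 an algebraically closed field and K = 𝔽{{t}} the field of Puiseux series. Let A ∈ (𝓡^× ∪ {−∞})^{n×n} be an ELT matrix whose rows are linearly dependent. Then there exists a matrix B ∈ K^{n×n} such that ELTrop(B) = A (entrywise) and the rows of B are linearly dependent over K. -/

import Mathlib

/-- The ELT algebra `𝓡(F, L)` together with an adjoined `−∞` element:
`bot` represents `−∞`, and `elt a ℓ` represents the element `[ℓ]a`
with tangible value `a ∈ F` and layer `ℓ ∈ L`.  Thus `ELT F L` plays the
role of `𝓡̄ = 𝓡 ∪ {−∞}`. -/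
inductive ELT (F : Type) (L : Type) : Type
  | bot : ELT F L
  | elt : F → L → ELT F L

namespace ELT

variable {F : Type} {L : Type}

/-- The sorting map `s : 𝓡̄ → L`, with `s (−∞) = 0`. -/
def s [Zero L] : ELT F L → L
  | bot => 0
  | elt _ ℓ => ℓ

/-- The tangible value `t : 𝓡̄ → F ∪ {−∞}`, with `t (−∞) = −∞ = ⊥`. -/
def t : ELT F L → WithBot F
  | bot => ⊥
  | elt a _ => (a : WithBot F)

/-- `−∞` is the additive identity of `𝓡̄`, so we register it as the zero. -/
instance : Zero (ELT F L) := ⟨bot⟩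

/-- The multiplicative identity `[1]0`. -/
instance [Zero F] [One L] : One (ELT F L) := ⟨elt 0 1⟩

/-- Addition on `𝓡̄`: the element with larger tangible value wins, and layers
add in case of a tie; `−∞` is neutral. -/
instance [LinearOrder F] [Add L] : Add (ELT F L) where
  add x y :=
    match x, y with
    | bot, y => y
    | x, bot => x
    | elt a ℓ, elt b k => if a < b then elt b k else if b < a then elt a ℓ else elt a (ℓ + k)

/-- Multiplication on `𝓡̄`: tangible values add, layers multiply; `−∞` is absorbing. -/
instance [Add F] [Mul L] : Mul (ELT F L) where
  mul x y :=
    match x, y with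
    | bot, _ => bot
    | _, bot => bot
    | elt a ℓ, elt b k => elt (a + b) (ℓ * k)

/-- The surpassing relation `x ⊨ y` on `𝓡̄`: `x = y + z` for some zero-layered `z`. -/
def Surpass [LinearOrder F] [Add L] [Zero L] (x y : ELT F L) : Prop :=
  ∃ z : ELT F L, s z = 0 ∧ x = y + z

/-- `x ∈ 𝓡^× ∪ {−∞}`: either `x = −∞` or `x` has nonzero layer. -/
def TangibleOrBot [Zero L] (x : ELT F L) : Prop :=
  x = bot ∨ s x ≠ 0

/-- The sum of a finite family of elements of `𝓡̄`. -/
def fsum [LinearOrder F] [Add L] {m : ℕ} (f : Fin m → ELT F L) : ELT F L :=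
  (List.ofFn f).sum

/-- A finite family of vectors in `𝓡̄ⁿ` is linearly dependent if there are
coefficients in `𝓡^× ∪ {−∞}`, not all `−∞`, such that the corresponding linear
combination is zero-layered in every coordinate (equivalently, some subfamily
admits a combination with all coefficients in `𝓡^×` which is zero-layered
everywhere). -/
def LinDep [LinearOrder F] [Zero L] [Add L] [Add F] [Mul L] {m n : ℕ}
    (v : Fin m → Fin n → ELT F L) : Prop :=
  ∃ a : Fin m → ELT F L, (∀ i, TangibleOrBot (a i)) ∧ (∃ i, a i ≠ bot) ∧
    ∀ j : Fin n, s (fsum fun i => a i * v i j) = 0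

/-- The ELT determinant of a square ELT matrix. -/
noncomputable def det {n : ℕ} [LinearOrder F] [Add F] [Zero F] [Ring L]
    (A : Matrix (Fin n) (Fin n) (ELT F L)) : ELT F L :=
  ((Finset.univ : Finset (Equiv.Perm (Fin n))).toList.map fun σ =>
    elt 0 (((Equiv.Perm.sign σ : ℤˣ) : ℤ) : L) * (List.ofFn fun i => A i (σ i)).prod).sum

/-- The EL tropicalization of a Hahn (generalized Puiseux) series: `0 ↦ −∞`,
and a nonzero series with leading monomial `ℓ tᵃ` goes to `[ℓ](−a)`. -/
noncomputable def ELTrop [AddCommGroup F] [LinearOrder F] [IsOrderedAddMonoid F] [Zero L] (x : HahnSeries F L) : ELT F L :=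
  open scoped Classical in
  if x = 0 then bot else elt (-x.order) (x.coeff x.order)

end ELT

/-!
Lift every entry `[ℓ]a` to the monomial `ℓ t^(-a)` and take the lifted dependence coefficients
`cᵢ`. In each column the ELT combination is zero-layered, so the lifted combination `T = ∑ cᵢ Bᵢⱼ`
has no term at the exponent of the dominant summand or below it: `T` is subleading. Subtracting
`c_{i₁}⁻¹ T` from an entry `i₁` realising the dominant summand makes the column sum vanish, and
does not change the tropicalization of that entry.
-/

namespace ELT

variable {F L : Type}

@[simp] lemma zero_eq_bot : (0 : ELT F L) = bot := rfl

@[simp] lemma tangibleOrBot_elt_iff [Zero L] {a : F} {ℓ : L} :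
    TangibleOrBot (elt a ℓ) ↔ ℓ ≠ 0 := by
  simp [TangibleOrBot, s]

@[simp] lemma t_bot : t (bot : ELT F L) = ⊥ := rfl

@[simp] lemma t_elt (a : F) (ℓ : L) : t (elt a ℓ) = a := rfl

@[simp] lemma bot_add [LinearOrder F] [Add L] (x : ELT F L) : bot + x = x := by cases x <;> rfl

@[simp] lemma add_bot [LinearOrder F] [Add L] (x : ELT F L) : x + bot = x := by cases x <;> rfl

lemma elt_add_elt [LinearOrder F] [Add L] (a b : F) (ℓ k : L) :
    elt a ℓ + elt b k =
      if a < b then elt b k else if b < a then elt a ℓ else elt a (ℓ + k) := rfl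

@[simp] lemma bot_mul [Add F] [Mul L] (x : ELT F L) : bot * x = bot := rfl

@[simp] lemma mul_bot [Add F] [Mul L] (x : ELT F L) : x * bot = bot := by cases x <;> rfl

@[simp] lemma elt_mul_elt [Add F] [Mul L] (a b : F) (ℓ k : L) :
    elt a ℓ * elt b k = elt (a + b) (ℓ * k) := rfl

lemma t_add [LinearOrder F] [Add L] (x y : ELT F L) : t (x + y) = max (t x) (t y) := by
  cases x with
  | bot => simp
  | elt a ℓ =>
    cases y with
    | bot => simp
    | elt b k =>
      rw [elt_add_elt]
      rcases lt_trichotomy a b with h | rfl | h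
      · simp [h, h.le]
      · simp
      · simp [h, h.le, h.not_gt]

lemma t_mul [Add F] [Mul L] (x y : ELT F L) : t (x * y) = t x + t y := by
  cases x <;> cases y <;> simp [WithBot.coe_add]

lemma t_fsum [LinearOrder F] [Add L] {m : ℕ} (f : Fin m → ELT F L) :
    t (fsum f) = Finset.univ.sup fun i => t (f i) := by
  induction m with
  | zero => rfl
  | succ m ih =>
    have := ih fun i => f i.succ
    simp only [fsum] at this ⊢
    rw [List.ofFn_succ, List.sum_cons, t_add, this, Fin.univ_succ, Finset.sup_cons, Finset.sup_map]
    rfl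

lemma exists_ne_bot_t_fsum_mul_eq [LinearOrder F] [Add F] [Add L] [Mul L] {m : ℕ}
    (a b : Fin m → ELT F L) {i₀ : Fin m} (hi₀ : a i₀ ≠ bot) :
    ∃ i, a i ≠ bot ∧ t (fsum fun i => a i * b i) = t (a i) + t (b i) := by
  obtain ⟨i, -, hi⟩ := Finset.univ.exists_mem_eq_sup ⟨i₀, Finset.mem_univ _⟩ fun i => t (a i * b i)
  rw [← t_fsum, t_mul] at hi
  by_cases hai : a i = bot
  · have hbot : t (fsum fun i => a i * b i) = ⊥ := by simp [hi, hai]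
    have hle : t (a i₀ * b i₀) ≤ t (fsum fun i => a i * b i) :=
      t_fsum (fun i => a i * b i) ▸ Finset.le_sup (f := fun i => t (a i * b i)) (Finset.mem_univ i₀)
    rw [hbot, le_bot_iff, t_mul] at hle
    exact ⟨i₀, hi₀, hbot.trans hle.symm⟩
  · exact ⟨i, hai, hi⟩

section Lift

variable [AddCommGroup F] [LinearOrder F]

noncomputable def lift [Zero L] : ELT F L → HahnSeries F L
  | bot => 0
  | elt a ℓ => HahnSeries.single (-a) ℓ

@[simp] lemma lift_bot [Zero L] : lift (bot : ELT F L) = 0 := rfl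

@[simp] lemma lift_elt [Zero L] (a : F) (ℓ : L) : lift (elt a ℓ) = HahnSeries.single (-a) ℓ := rfl

lemma lift_eq_zero_iff [Zero L] {x : ELT F L} : lift x = 0 ↔ s x = 0 := by
  cases x <;> simp [s]

lemma lift_ne_zero [Zero L] {x : ELT F L} (hx : TangibleOrBot x) (hne : x ≠ bot) : lift x ≠ 0 :=
  lift_eq_zero_iff.not.mpr (hx.resolve_left hne)

lemma lift_mul [IsOrderedAddMonoid F] [NonUnitalNonAssocSemiring L] (x y : ELT F L) :
    lift (x * y) = lift x * lift y := by
  cases x <;> cases y <;> simp [add_comm]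

/-- `R` has only terms whose ELT tropicalization lies strictly below `v`; `ELTrop` negates
exponents, hence the `-e`. -/
def Subleading [Zero L] (v : WithBot F) (R : HahnSeries F L) : Prop :=
  ∀ e : F, v ≤ ↑(-e) → R.coeff e = 0

lemma subleading_zero [Zero L] (v : WithBot F) : Subleading v (0 : HahnSeries F L) :=
  fun _ _ => rfl

lemma eq_zero_of_subleading_bot [Zero L] {R : HahnSeries F L} (h : Subleading ⊥ R) : R = 0 :=
  HahnSeries.coeff_fun_eq_zero_iff.mp (funext fun e => h e bot_le)

lemma Subleading.mono [Zero L] {v w : WithBot F} {R : HahnSeries F L} (hvw : v ≤ w)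
    (h : Subleading v R) : Subleading w R :=
  fun e he => h e (hvw.trans he)

lemma Subleading.add [AddMonoid L] {v : WithBot F} {R S : HahnSeries F L}
    (hR : Subleading v R) (hS : Subleading v S) : Subleading v (R + S) :=
  fun e he => by rw [HahnSeries.coeff_add, hR e he, hS e he, add_zero]

lemma Subleading.single_mul [IsOrderedAddMonoid F] [NonUnitalNonAssocSemiring L]
    {v : WithBot F} {R : HahnSeries F L} {g : F} (k : L) (h : Subleading ((g : WithBot F) + v) R) :
    Subleading v (HahnSeries.single g k * R) := by
  intro e he
  have hle : (g : WithBot F) + v ≤ ↑(-(e - g)) := by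
    rw [neg_sub, sub_eq_add_neg, WithBot.coe_add]
    gcongr
  rw [← sub_add_cancel e g, HahnSeries.coeff_single_mul_add, h _ hle, mul_zero]

lemma coeff_single_neg_of_lt [Zero L] {a e : F} (ℓ : L) (h : a < -e) :
    (HahnSeries.single (-a) ℓ).coeff e = 0 :=
  HahnSeries.coeff_single_of_ne fun hea => h.ne' (by rw [hea, neg_neg])

lemma subleading_lift_add_lift_sub_lift_add [AddGroup L] (x y : ELT F L) :
    Subleading (t (x + y)) (lift x + lift y - lift (x + y)) := by
  cases x with
  | bot => simpa using subleading_zero _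
  | elt a ℓ =>
    cases y with
    | bot => simpa using subleading_zero _
    | elt b k =>
      intro e he
      rw [elt_add_elt] at he ⊢
      rcases lt_trichotomy a b with h | rfl | h
      · simp only [h, if_true, t_elt, WithBot.coe_le_coe] at he
        simpa [h] using coeff_single_neg_of_lt ℓ (h.trans_le he)
      · simp
      · simp only [h, h.not_gt, if_false, if_true, t_elt, WithBot.coe_le_coe] at he ⊢
        simp [coeff_single_neg_of_lt k (h.trans_le he)]

lemma subleading_sum_map_lift_sub_lift_sum [AddCommGroup L] (xs : List (ELT F L)) :
    Subleading (t xs.sum) ((xs.map lift).sum - lift xs.sum) := by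
  induction xs with
  | nil => simpa using subleading_zero _
  | cons x xs ih =>
    have hsplit : ((x :: xs).map lift).sum - lift (x :: xs).sum =
        ((xs.map lift).sum - lift xs.sum) + (lift x + lift xs.sum - lift (x + xs.sum)) := by
      simp only [List.map_cons, List.sum_cons]
      abel
    rw [hsplit, List.sum_cons]
    exact (ih.mono (t_add x xs.sum ▸ le_max_right _ _)).add
      (subleading_lift_add_lift_sub_lift_add x xs.sum)

lemma subleading_sum_lift [AddCommGroup L] {m : ℕ} (f : Fin m → ELT F L) (hf : s (fsum f) = 0) :
    Subleading (t (fsum f)) (∑ i, lift (f i)) := by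
  have h := subleading_sum_map_lift_sub_lift_sum (List.ofFn f)
  rwa [List.map_ofFn, List.sum_ofFn, ← fsum, lift_eq_zero_iff.mpr hf, sub_zero] at h

lemma ELTrop_lift_sub [IsOrderedAddMonoid F] [AddGroup L] {x : ELT F L} {R : HahnSeries F L}
    (hx : TangibleOrBot x) (hR : Subleading (t x) R) : ELTrop (lift x - R) = x := by
  cases x with
  | bot => simp [eq_zero_of_subleading_bot hR, ELTrop]
  | elt a ℓ =>
    have hℓ : ℓ ≠ 0 := tangibleOrBot_elt_iff.mp hx
    set y := HahnSeries.single (-a) ℓ - R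
    have hRa : ∀ e ≤ -a, R.coeff e = 0 := fun e he => hR e (WithBot.coe_le_coe.mpr (le_neg.mpr he))
    have hya : y.coeff (-a) = ℓ := by simp [y, hRa]
    have hy : y ≠ 0 := fun h => hℓ (by rw [← hya, h, HahnSeries.coeff_zero])
    have hord : y.order = -a := by
      refine le_antisymm (HahnSeries.order_le_of_coeff_ne_zero (hya ▸ hℓ)) (not_lt.mp fun hlt => ?_)
      refine hy (HahnSeries.coeff_order_eq_zero.mp ?_)
      simp [y, HahnSeries.coeff_single_of_ne hlt.ne, hRa _ hlt.le]
    rw [lift_elt, ELTrop, if_neg hy, hord, hya, neg_neg]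

end Lift

section Column

variable [AddCommGroup F] [LinearOrder F] [IsOrderedAddMonoid F] [Field L]

theorem exists_lift_column {m : ℕ} {a col : Fin m → ELT F L} (ha : ∀ i, TangibleOrBot (a i))
    (hcol : ∀ i, TangibleOrBot (col i)) {i₀ : Fin m} (hi₀ : a i₀ ≠ bot)
    (hdep : s (fsum fun i => a i * col i) = 0) :
    ∃ B : Fin m → HahnSeries F L, (∀ i, ELTrop (B i) = col i) ∧ ∑ i, lift (a i) * B i = 0 := by
  set T := ∑ i, lift (a i) * lift (col i)
  have hT : Subleading (t (fsum fun i => a i * col i)) T := by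
    simpa only [lift_mul] using subleading_sum_lift _ hdep
  obtain ⟨i₁, hi₁, hmax⟩ := exists_ne_bot_t_fsum_mul_eq a col hi₀
  obtain ⟨va, ℓa, ha₁⟩ : ∃ va ℓa, a i₁ = elt va ℓa := by
    cases h : a i₁ with
    | bot => exact absurd h hi₁
    | elt va ℓa => exact ⟨va, ℓa, rfl⟩
  have hℓa : ℓa ≠ 0 := tangibleOrBot_elt_iff.mp (ha₁ ▸ ha i₁)
  set R := HahnSeries.single va ℓa⁻¹ * T
  have hR : Subleading (t (col i₁)) R := by
    refine Subleading.single_mul _ ?_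
    rwa [← t_elt va ℓa, ← ha₁, ← hmax]
  have hcancel : lift (a i₁) * R = T := by
    rw [ha₁, lift_elt, ← mul_assoc, HahnSeries.single_mul_single, neg_add_cancel,
      mul_inv_cancel₀ hℓa, HahnSeries.single_zero_one, one_mul]
  refine ⟨fun i => lift (col i) - if i = i₁ then R else 0, fun i => ELTrop_lift_sub (hcol i) ?_, ?_⟩
  · split_ifs with h
    · exact h ▸ hR
    · exact subleading_zero _
  · simp only [mul_sub, mul_ite, mul_zero, Finset.sum_sub_distrib, Finset.sum_ite_eq',
      Finset.mem_univ, if_true, hcancel]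
    exact sub_self T

end Column

end ELT

theorem stmt6_general {𝔽 : Type} [Field 𝔽] {n : ℕ}
    (A : Matrix (Fin n) (Fin n) (ELT ℝ 𝔽))
    (hent : ∀ i j, ELT.TangibleOrBot (A i j))
    (hdep : ELT.LinDep (fun i j => A i j)) :
    ∃ B : Matrix (Fin n) (Fin n) (HahnSeries ℝ 𝔽),
      (∀ i j, ELT.ELTrop (B i j) = A i j) ∧
      ∃ c : Fin n → HahnSeries ℝ 𝔽, c ≠ 0 ∧ ∀ j, ∑ i, c i * B i j = 0 := by
  obtain ⟨a, ha, ⟨i₀, hi₀⟩, hcomb⟩ := hdep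
  choose col hcol hsum using fun j => ELT.exists_lift_column ha (hent · j) hi₀ (hcomb j)
  exact ⟨fun i j => col j i, fun i j => hcol j i, fun i => ELT.lift (a i),
    fun hc => ELT.lift_ne_zero (ha i₀) hi₀ (congrFun hc i₀), hsum⟩

/-- An ELT matrix with entries in `𝓡^× ∪ {−∞}` and linearly dependent rows can
be lifted to a matrix of Puiseux series with linearly dependent rows. -/
theorem stmt6 {𝔽 : Type} [Field 𝔽] [IsAlgClosed 𝔽] {n : ℕ}
    (A : Matrix (Fin n) (Fin n) (ELT ℝ 𝔽))
    (hent : ∀ i j, ELT.TangibleOrBot (A i j))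
    (hdep : ELT.LinDep (fun i j => A i j)) :
    ∃ B : Matrix (Fin n) (Fin n) (HahnSeries ℝ 𝔽),
      (∀ i j, ELT.ELTrop (B i j) = A i j) ∧
      ∃ c : Fin n → HahnSeries ℝ 𝔽, c ≠ 0 ∧ ∀ j, ∑ i, c i * B i j = 0 :=
  stmt6_general A hent hdep
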